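/- arXiv:0711.3711 — 3 statements merged into one kernel-verified Lean document; each statement's English description precedes it below -/
import Mathlib

section
/- Define the partial order on Z_{≥1}^3 by a ≤ ã iff a_i ≤ ã_i for i = 1,2,3, and let rev(a) = (a_3,a_2,a_1). Let Fin = {(1,2,a), (1,a,1), (a,1,b) : a,b ∈ Z_{≥1}} ∪ {(1,3,4), (1,5,2), (2,2,4)} and Inf = {(1,3,5), (1,4,3), (1,6,2), (2,2,5), (2,3,2), (3,2,3)}. Then every a ∈ Z_{≥1}^3 is either ≤ some element of Fin ∪ rev(Fin), or ≥ some element of Inf ∪ rev(Inf), and these two alternatives are mutually exclusive. -/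
/-!
The down-set of `FinTriples ∪ trev '' FinTriples` and the up-set of `InfTriples ∪ trev '' InfTriples`
are both cut out by coordinate inequalities with thresholds at most `6` (an unbounded family such
as `(1, 2, c)` contributes `a₁ ≤ 1 ∧ a₂ ≤ 2`). Truncating every coordinate at `6` therefore changes
neither membership, and it remains to check that the two descriptions are complementary on the
triples in `[1, 6]³`.
-/

/-- componentwise partial order on triples. -/
def tle (a b : ℕ × ℕ × ℕ) : Prop := a.1 ≤ b.1 ∧ a.2.1 ≤ b.2.1 ∧ a.2.2 ≤ b.2.2

/-- the reverse of a triple. -/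
def trev (a : ℕ × ℕ × ℕ) : ℕ × ℕ × ℕ := (a.2.2, a.2.1, a.1)

/-- the maximal finite triples of Table 2. -/
def FinTriples : Set (ℕ × ℕ × ℕ) :=
  {x | (∃ a, 1 ≤ a ∧ x = (1, 2, a)) ∨ (∃ a, 1 ≤ a ∧ x = (1, a, 1)) ∨
    (∃ a b, 1 ≤ a ∧ 1 ≤ b ∧ x = (a, 1, b)) ∨ x = (1, 3, 4) ∨ x = (1, 5, 2) ∨ x = (2, 2, 4)}

/-- the minimal infinite triples of Table 1. -/
def InfTriples : Set (ℕ × ℕ × ℕ) :=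
  {(1, 3, 5), (1, 4, 3), (1, 6, 2), (2, 2, 5), (2, 3, 2), (3, 2, 3)}

def IsBelowFinTriple (x y z : ℕ) : Prop :=
  x ≤ 1 ∧ y ≤ 2 ∨ x ≤ 1 ∧ z ≤ 1 ∨ y ≤ 1 ∨ x ≤ 1 ∧ y ≤ 3 ∧ z ≤ 4 ∨ x ≤ 1 ∧ y ≤ 5 ∧ z ≤ 2 ∨
    x ≤ 2 ∧ y ≤ 2 ∧ z ≤ 4

instance (x y z : ℕ) : Decidable (IsBelowFinTriple x y z) := by
  unfold IsBelowFinTriple; infer_instance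

def IsAboveInfTriple (x y z : ℕ) : Prop :=
  1 ≤ x ∧ 3 ≤ y ∧ 5 ≤ z ∨ 1 ≤ x ∧ 4 ≤ y ∧ 3 ≤ z ∨ 1 ≤ x ∧ 6 ≤ y ∧ 2 ≤ z ∨
    2 ≤ x ∧ 2 ≤ y ∧ 5 ≤ z ∨ 2 ≤ x ∧ 3 ≤ y ∧ 2 ≤ z ∨ 3 ≤ x ∧ 2 ≤ y ∧ 3 ≤ z

instance (x y z : ℕ) : Decidable (IsAboveInfTriple x y z) := by
  unfold IsAboveInfTriple; infer_instance

theorem tle_trev_iff {a b : ℕ × ℕ × ℕ} : tle a (trev b) ↔ tle (trev a) b := by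
  simp only [tle, trev]
  tauto

theorem exists_above_mem_union_trev_iff {S : Set (ℕ × ℕ × ℕ)} {a : ℕ × ℕ × ℕ} :
    (∃ f ∈ S ∪ trev '' S, tle a f) ↔ (∃ f ∈ S, tle a f) ∨ ∃ f ∈ S, tle (trev a) f := by
  simp only [Set.mem_union, or_and_right, exists_or, Set.exists_mem_image, tle_trev_iff]

theorem exists_below_mem_union_trev_iff {S : Set (ℕ × ℕ × ℕ)} {a : ℕ × ℕ × ℕ} :
    (∃ g ∈ S ∪ trev '' S, tle g a) ↔ (∃ g ∈ S, tle g a) ∨ ∃ g ∈ S, tle g (trev a) := by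
  simp only [Set.mem_union, or_and_right, exists_or, Set.exists_mem_image, ← tle_trev_iff]

theorem exists_finTriple_above_iff (a : ℕ × ℕ × ℕ) :
    (∃ f ∈ FinTriples, tle a f) ↔ IsBelowFinTriple a.1 a.2.1 a.2.2 := by
  obtain ⟨x, y, z⟩ := a
  simp only [FinTriples, IsBelowFinTriple, tle, Set.mem_ofPred_eq, exists_and_left,
    or_and_right, exists_or, existsAndEq, and_true, true_and]
  constructor
  · rintro (⟨_, _, h⟩ | ⟨_, _, h⟩ | ⟨_, _, _, h⟩ | h) <;> omega
  · rintro (h | h | h | h)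
    · exact Or.inl ⟨max z 1, by omega⟩
    · exact Or.inr (Or.inl ⟨max y 1, by omega⟩)
    · exact Or.inr (Or.inr (Or.inl ⟨max x 1, max z 1, by omega⟩))
    · exact Or.inr (Or.inr (Or.inr h))

theorem exists_infTriple_below_iff (a : ℕ × ℕ × ℕ) :
    (∃ g ∈ InfTriples, tle g a) ↔ IsAboveInfTriple a.1 a.2.1 a.2.2 := by
  simp [InfTriples, IsAboveInfTriple, tle]

theorem isBelowFinTriple_min_six_iff {x y z : ℕ} :
    IsBelowFinTriple (min x 6) (min y 6) (min z 6) ↔ IsBelowFinTriple x y z := by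
  simp only [IsBelowFinTriple, min_le_iff]
  norm_num

theorem isAboveInfTriple_min_six_iff {x y z : ℕ} :
    IsAboveInfTriple (min x 6) (min y 6) (min z 6) ↔ IsAboveInfTriple x y z := by
  simp only [IsAboveInfTriple, le_min_iff]
  norm_num

theorem xor_isBelowFinTriple_isAboveInfTriple_of_mem_Icc :
    ∀ x ∈ Finset.Icc 1 6, ∀ y ∈ Finset.Icc 1 6, ∀ z ∈ Finset.Icc 1 6,
      Xor (IsBelowFinTriple x y z ∨ IsBelowFinTriple z y x)
        (IsAboveInfTriple x y z ∨ IsAboveInfTriple z y x) := by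
  decide

theorem stmt4 (a : ℕ × ℕ × ℕ) (h : 1 ≤ a.1 ∧ 1 ≤ a.2.1 ∧ 1 ≤ a.2.2) :
    ((∃ f ∈ FinTriples ∪ trev '' FinTriples, tle a f) ∨
      (∃ g ∈ InfTriples ∪ trev '' InfTriples, tle g a)) ∧
    ¬ ((∃ f ∈ FinTriples ∪ trev '' FinTriples, tle a f) ∧
      (∃ g ∈ InfTriples ∪ trev '' InfTriples, tle g a)) := by
  obtain ⟨x, y, z⟩ := a
  obtain ⟨hx, hy, hz⟩ := h
  have min_six_mem {n : ℕ} (hn : 1 ≤ n) : min n 6 ∈ Finset.Icc 1 6 :=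
    Finset.mem_Icc.2 ⟨le_min hn (by norm_num), min_le_right n 6⟩
  have key := xor_isBelowFinTriple_isAboveInfTriple_of_mem_Icc _ (min_six_mem hx) _
    (min_six_mem hy) _ (min_six_mem hz)
  rw [← xor_iff_or_and_not_and, exists_above_mem_union_trev_iff, exists_below_mem_union_trev_iff,
    exists_finTriple_above_iff, exists_finTriple_above_iff,
    exists_infTriple_below_iff, exists_infTriple_below_iff]
  simpa only [trev, isBelowFinTriple_min_six_iff, isAboveInfTriple_min_six_iff] using key
end

section
/- In the setting of the quiver Q(a) with relations as above, the representations Δ(1), ..., Δ(t) are pairwise non-isomorphic indecomposable representations, and Hom(Δ(i), Δ(j)) ≠ 0 if and only if j ≤ i (with the convention that Δ(i)_m = k for m ≥ i). -/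
universe u v

/-- A representation of the quiver `Q(a)` for `a = (a1, a2, a3)`: vector spaces `V j` and
linear maps `α j : V j → V (j+1)`, `β₁ : V b₂ → V b₁`, `β₂ : V b₃ → V b₂`, where
`b₁ = a1`, `b₂ = a1 + a2`, `b₃ = a1 + a2 + a3` (only the vertices `1, …, b₃` are relevant). -/
structure QRep (k : Type u) [Field k] (a1 a2 a3 : ℕ) where
  V : ℕ → Type v
  [grp : ∀ j, AddCommGroup (V j)]
  [mod : ∀ j, Module k (V j)]
  α : ∀ j, V j →ₗ[k] V (j + 1)
  β1 : V (a1 + a2) →ₗ[k] V a1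
  β2 : V (a1 + a2 + a3) →ₗ[k] V (a1 + a2)

attribute [instance] QRep.grp QRep.mod

variable {k : Type u} [Field k] {a1 a2 a3 : ℕ}

/-- the composite `α_{u+len-1} ∘ ⋯ ∘ α_u : V u → V (u + len)`. -/
def pathMap (M : QRep k a1 a2 a3) (u : ℕ) : (len : ℕ) → (M.V u →ₗ[k] M.V (u + len))
  | 0 => LinearMap.id
  | (len + 1) => (M.α (u + len)).comp (pathMap M u len)

/-- the relation `β₁ ∘ α_{b₂-1} ∘ ⋯ ∘ α_{b₁} = 0`. -/
def Rel1 (M : QRep k a1 a2 a3) : Prop := M.β1.comp (pathMap M a1 a2) = 0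

/-- the relation `α_{b₂-1} ⋯ α_{b₁} ∘ β₁ = β₂ ∘ α_{b₃-1} ⋯ α_{b₂}`. -/
def Rel2 (M : QRep k a1 a2 a3) : Prop :=
  (pathMap M a1 a2).comp M.β1 = M.β2.comp (pathMap M (a1 + a2) a3)

/-- the vector space at vertex `j` of the standard module `Δ(i)`: it is `k` if `j ≥ i` and
`0` otherwise (realized as the submodules `⊤` resp. `⊥` of `k`). -/
def DeltaV (k : Type u) [Field k] (i j : ℕ) : Submodule k k := if i ≤ j then ⊤ else ⊥

/-- the standard module `Δ(i)`: the maps `α_j` act as the identity for `j ≥ i` (and are zero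
otherwise, the source being the zero space), and `β₁`, `β₂` act as zero. -/
def Delta (k : Type u) [Field k] (a1 a2 a3 i : ℕ) : QRep k a1 a2 a3 where
  V j := ↥(DeltaV k i j)
  grp := fun _ => inferInstance
  mod := fun _ => inferInstance
  α j := Submodule.inclusion (by
    unfold DeltaV
    split_ifs with h1 h2 <;> first | exact le_rfl | exact bot_le | omega)
  β1 := 0
  β2 := 0

/-- a morphism of representations of `Q(a)`: linear maps at each vertex commuting with the
structure maps. -/
structure QHom (M N : QRep k a1 a2 a3) where
  f : ∀ j, M.V j →ₗ[k] N.V j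
  hα : ∀ j, (N.α j).comp (f j) = (f (j + 1)).comp (M.α j)
  hβ1 : N.β1.comp (f (a1 + a2)) = (f a1).comp M.β1
  hβ2 : N.β2.comp (f (a1 + a2 + a3)) = (f (a1 + a2)).comp M.β2

/-! At each vertex `Δ(i)` is `k` or `0`, and every `α` between two nonzero spaces is the
identity of `k`. Commuting with the `α`s therefore forces a morphism `Δ(i) → Δ(j)` to act at every
vertex as multiplication by its value `c` on `1 ∈ Δ(i)_i`. If `i < j` then `Δ(j)_i = 0`, so
`c = 0` and the morphism vanishes; if `j ≤ i` the inclusions of subspaces of `k` give `c = 1`.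
An idempotent endomorphism has `c² = c`, hence is `0` or the identity. -/

namespace DeltaV

variable {i j m : ℕ}

theorem eq_top (h : i ≤ m) : DeltaV k i m = ⊤ := if_pos h

theorem eq_bot (h : m < i) : DeltaV k i m = ⊥ := if_neg (Nat.not_le.2 h)

theorem antitone (h : j ≤ i) : DeltaV k i m ≤ DeltaV k j m := by
  unfold DeltaV
  split_ifs <;> first | exact le_rfl | exact bot_le | omega

def one (h : i ≤ m) : DeltaV k i m := ⟨1, by simp [eq_top h]⟩

theorem eq_zero (h : m < i) (x : DeltaV k i m) : x = 0 := by
  simpa [eq_bot h] using x.2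

theorem eq_smul_one (h : i ≤ m) (x : DeltaV k i m) : x = (x : k) • one h :=
  Subtype.ext (mul_one _).symm

end DeltaV

namespace QHom

variable {i j : ℕ}

def scalar (u : QHom (Delta k a1 a2 a3 i) (Delta k a1 a2 a3 j)) : k :=
  (u.f i (DeltaV.one le_rfl)).1

theorem coe_f_apply (u : QHom (Delta k a1 a2 a3 i) (Delta k a1 a2 a3 j)) (m : ℕ)
    (x : DeltaV k i m) : (u.f m x).1 = u.scalar * x := by
  rcases lt_or_ge m i with hm | hm
  · rw [DeltaV.eq_zero hm x, ZeroMemClass.coe_zero, mul_zero]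
    exact congrArg Subtype.val (map_zero (u.f m))
  induction m, hm using Nat.le_induction with
  | base =>
    conv_lhs => rw [DeltaV.eq_smul_one le_rfl x]
    erw [map_smul]
    exact mul_comm _ _
  | succ m hm ih =>
    have h := congrArg Subtype.val
      (LinearMap.congr_fun (u.hα m) (⟨x, by simp [DeltaV.eq_top hm]⟩ : DeltaV k i m))
    exact h.symm.trans (ih _)

theorem f_eq_zero_iff (u : QHom (Delta k a1 a2 a3 i) (Delta k a1 a2 a3 j)) :
    (∀ m, u.f m = 0) ↔ u.scalar = 0 := by
  refine ⟨fun h => congrArg Subtype.val (LinearMap.congr_fun (h i) _), fun h m => ?_⟩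
  exact LinearMap.ext fun x => Subtype.ext ((u.coe_f_apply m x).trans (by rw [h, zero_mul]; rfl))

theorem exists_f_ne_zero_iff (u : QHom (Delta k a1 a2 a3 i) (Delta k a1 a2 a3 j)) :
    (∃ m, u.f m ≠ 0) ↔ u.scalar ≠ 0 := by
  rw [Ne, ← f_eq_zero_iff, not_forall]

theorem scalar_eq_zero_of_lt (h : i < j) (u : QHom (Delta k a1 a2 a3 i) (Delta k a1 a2 a3 j)) :
    u.scalar = 0 :=
  congrArg Subtype.val (DeltaV.eq_zero h _)

theorem f_eq_id (e : QHom (Delta k a1 a2 a3 i) (Delta k a1 a2 a3 i)) (h : e.scalar = 1)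
    (m : ℕ) : e.f m = LinearMap.id :=
  LinearMap.ext fun x => Subtype.ext ((e.coe_f_apply m x).trans (by rw [h, one_mul]; rfl))

theorem isIdempotentElem_scalar (e : QHom (Delta k a1 a2 a3 i) (Delta k a1 a2 a3 i))
    (he : (e.f i).comp (e.f i) = e.f i) : IsIdempotentElem e.scalar :=
  (e.coe_f_apply i _).symm.trans
    (congrArg Subtype.val (LinearMap.congr_fun he (DeltaV.one le_rfl)))

theorem comp_ne_id_of_lt (h : i < j) (u : QHom (Delta k a1 a2 a3 i) (Delta k a1 a2 a3 j))
    (v : QHom (Delta k a1 a2 a3 j) (Delta k a1 a2 a3 i)) : (v.f i).comp (u.f i) ≠ LinearMap.id := by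
  intro hvu
  have h1 : v.scalar * u.scalar = 1 := (v.coe_f_apply i _).symm.trans
    (congrArg Subtype.val (LinearMap.congr_fun hvu (DeltaV.one le_rfl)))
  rw [u.scalar_eq_zero_of_lt h, mul_zero] at h1
  exact zero_ne_one h1

def ofLE (h : j ≤ i) : QHom (Delta k a1 a2 a3 i) (Delta k a1 a2 a3 j) where
  f _ := Submodule.inclusion (DeltaV.antitone h)
  hα _ := rfl
  hβ1 := rfl
  hβ2 := rfl

end QHom

namespace Delta

variable {i j : ℕ}

theorem idempotent_eq_zero_or_id (e : QHom (Delta k a1 a2 a3 i) (Delta k a1 a2 a3 i))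
    (he : ∀ m, (e.f m).comp (e.f m) = e.f m) :
    (∀ m, e.f m = 0) ∨ (∀ m, e.f m = LinearMap.id) :=
  (IsIdempotentElem.iff_eq_zero_or_one.1 (e.isIdempotentElem_scalar (he i))).imp
    e.f_eq_zero_iff.2 e.f_eq_id

theorem not_iso_of_ne (hij : i ≠ j) :
    ¬ ∃ (u : QHom (Delta k a1 a2 a3 i) (Delta k a1 a2 a3 j))
      (v : QHom (Delta k a1 a2 a3 j) (Delta k a1 a2 a3 i)),
      (∀ m, (v.f m).comp (u.f m) = LinearMap.id) ∧ (∀ m, (u.f m).comp (v.f m) = LinearMap.id) := by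
  rintro ⟨u, v, hvu, huv⟩
  rcases hij.lt_or_gt with h | h
  · exact u.comp_ne_id_of_lt h v (hvu i)
  · exact v.comp_ne_id_of_lt h u (huv j)

theorem exists_hom_ne_zero_iff :
    (∃ u : QHom (Delta k a1 a2 a3 i) (Delta k a1 a2 a3 j), ∃ m, u.f m ≠ 0) ↔ j ≤ i := by
  simp only [QHom.exists_f_ne_zero_iff]
  refine ⟨fun ⟨u, hu⟩ => Nat.not_lt.1 fun h => hu (u.scalar_eq_zero_of_lt h), fun h => ?_⟩
  exact ⟨QHom.ofLE h, one_ne_zero⟩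

end Delta

theorem stmt9_general (i : ℕ) (j : ℕ) :
    (∀ e : QHom (Delta k a1 a2 a3 i) (Delta k a1 a2 a3 i),
      (∀ m, (e.f m).comp (e.f m) = e.f m) →
      (∀ m, e.f m = 0) ∨ (∀ m, e.f m = LinearMap.id)) ∧
    (i ≠ j → ¬ ∃ (u : QHom (Delta k a1 a2 a3 i) (Delta k a1 a2 a3 j))
      (v : QHom (Delta k a1 a2 a3 j) (Delta k a1 a2 a3 i)),
      (∀ m, (v.f m).comp (u.f m) = LinearMap.id) ∧
      (∀ m, (u.f m).comp (v.f m) = LinearMap.id)) ∧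
    ((∃ u : QHom (Delta k a1 a2 a3 i) (Delta k a1 a2 a3 j), ∃ m, u.f m ≠ 0) ↔ j ≤ i) :=
  ⟨Delta.idempotent_eq_zero_or_id, Delta.not_iso_of_ne, Delta.exists_hom_ne_zero_iff⟩

/-- The standard modules `Δ(1), …, Δ(t)` are indecomposable (every idempotent endomorphism
is `0` or the identity), pairwise non-isomorphic, and `Hom(Δ(i), Δ(j)) ≠ 0` iff `j ≤ i`. -/
theorem stmt9 (ha1 : 1 ≤ a1) (ha2 : 1 ≤ a2) (ha3 : 1 ≤ a3)
    (i : ℕ) (hi1 : 1 ≤ i) (hi2 : i ≤ a1 + a2 + a3)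
    (j : ℕ) (hj1 : 1 ≤ j) (hj2 : j ≤ a1 + a2 + a3) :
    (∀ e : QHom (Delta k a1 a2 a3 i) (Delta k a1 a2 a3 i),
      (∀ m, (e.f m).comp (e.f m) = e.f m) →
      (∀ m, e.f m = 0) ∨ (∀ m, e.f m = LinearMap.id)) ∧
    (i ≠ j → ¬ ∃ (u : QHom (Delta k a1 a2 a3 i) (Delta k a1 a2 a3 j))
      (v : QHom (Delta k a1 a2 a3 j) (Delta k a1 a2 a3 i)),
      (∀ m, (v.f m).comp (u.f m) = LinearMap.id) ∧
      (∀ m, (u.f m).comp (v.f m) = LinearMap.id)) ∧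
    ((∃ u : QHom (Delta k a1 a2 a3 i) (Delta k a1 a2 a3 j), ∃ m, u.f m ≠ 0) ↔ j ≤ i) :=
  stmt9_general i j
end

section
/- Let ã ≤ a in Z_{≥1}^3 and let f be the collapsing map defined by f(i) = i − b_j + b̃_j if b_j < i ≤ b_j + ã_{j+1} and f(i) = b̃_{j+1} if b_j + ã_{j+1} < i ≤ b_{j+1}. Given a representation M̃ of the quiver Q(ã) satisfying its relations, define a representation M of Q(a) by M_i = M̃_{f(i)}, with M_{α_i} the identity when f(i+1) = f(i), M_{α_i} = M̃_{α_{f(i)}} when f(i+1) = f(i)+1, and M_{β_{b_j}} = M̃_{β_{b̃_j}}. Then M satisfies the relations of Q(a): β_{b_1}α_{b_2−1}···α_{b_1} = 0 and α_{b_2−1}···α_{b_1}β_{b_1} = β_{b_2}α_{b_3−1}···α_{b_2}. -/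
universe u v

variable {k : Type u} [Field k] {a1 a2 a3 : ℕ}

/-- transport along an equality of vertices. -/
def castV (M : QRep k a1 a2 a3) {m n : ℕ} (h : m = n) : M.V m →ₗ[k] M.V n := by
  subst h; exact LinearMap.id

variable {c1 c2 c3 : ℕ}

/-- The collapse of a representation `M` of `Q(ã)` (for `ã = (c1,c2,c3)`) along a
collapsing map `f` to a representation of `Q(a)` (for `a = (a1,a2,a3)`): the space at
vertex `i` is `M_{f(i)}`, `α_i` is the identity when `f(i+1) = f(i)` and `M_{α_{f(i)}}`
when `f(i+1) = f(i)+1`, and the `β`'s are those of `M`. -/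
def collapse (M : QRep k c1 c2 c3) (a1 a2 a3 : ℕ) (f : ℕ → ℕ)
    (hstep : ∀ i, f (i + 1) = f i ∨ f (i + 1) = f i + 1)
    (hb1 : f a1 = c1) (hb2 : f (a1 + a2) = c1 + c2)
    (hb3 : f (a1 + a2 + a3) = c1 + c2 + c3) : QRep k a1 a2 a3 where
  V i := M.V (f i)
  grp := fun i => M.grp (f i)
  mod := fun i => M.mod (f i)
  α i :=
    if h : f (i + 1) = f i then castV M h.symm
    else (castV M ((hstep i).resolve_left h).symm).comp (M.α (f i))
  β1 := (castV M hb1.symm).comp (M.β1.comp (castV M hb2))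
  β2 := (castV M hb2.symm).comp (M.β2.comp (castV M hb3))

/-
The path maps of the collapsed representation are, up to transport along equalities of
vertices, path maps of `M`: each arrow of `Q(a)` is sent either to an identity or to an arrow
of `Q(ã)`, and the path from `b_j` to `b_{j+1}` is sent to the path from `b̃_j` to `b̃_{j+1}`.
The relations of `Q(a)` are therefore conjugates of those of `Q(ã)`.
-/

section CastV

variable (M : QRep k a1 a2 a3)

@[simp]
lemma castV_rfl {m : ℕ} (h : m = m) : castV M h = LinearMap.id := rfl

@[simp]
lemma castV_comp_castV_comp {m n p q : ℕ} (h₁ : m = n) (h₂ : n = p)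
    (g : M.V q →ₗ[k] M.V m) :
    (castV M h₂).comp ((castV M h₁).comp g) = (castV M (h₁.trans h₂)).comp g := by
  subst h₁ h₂; rfl

lemma α_comp_castV {m n : ℕ} (h : m = n) :
    (M.α n).comp (castV M h) = (castV M (congrArg (· + 1) h)).comp (M.α m) := by
  subst h; rfl

lemma pathMap_succ (u len : ℕ) :
    pathMap M u (len + 1) = (M.α (u + len)).comp (pathMap M u len) := rfl

end CastV

section Collapse

variable (M : QRep k c1 c2 c3) {f : ℕ → ℕ} (hstep : ∀ i, f (i + 1) = f i ∨ f (i + 1) = f i + 1)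
  (hb1 : f a1 = c1) (hb2 : f (a1 + a2) = c1 + c2) (hb3 : f (a1 + a2 + a3) = c1 + c2 + c3)

include hstep in
lemma monotone_of_succ_eq_or_eq_succ : Monotone f :=
  monotone_nat_of_le_succ fun i => by rcases hstep i with h | h <;> omega

lemma collapse_α_of_eq {i : ℕ} (h : f (i + 1) = f i) :
    (collapse M a1 a2 a3 f hstep hb1 hb2 hb3).α i = castV M h.symm :=
  dif_pos h

lemma collapse_α_of_eq_succ {i : ℕ} (h : f (i + 1) = f i + 1) :
    (collapse M a1 a2 a3 f hstep hb1 hb2 hb3).α i = (castV M h.symm).comp (M.α (f i)) :=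
  dif_neg (by omega)

lemma pathMap_collapse_eq_castV (u len d : ℕ) (hd : f (u + len) = f u + d) :
    pathMap (collapse M a1 a2 a3 f hstep hb1 hb2 hb3) u len =
      (castV M hd.symm).comp (pathMap M (f u) d) := by
  induction len generalizing d with
  | zero =>
    obtain rfl : d = 0 := by simpa using hd
    rfl
  | succ n ih =>
    have hd' : f (u + n + 1) = f u + d := hd
    rw [pathMap_succ]
    rcases hstep (u + n) with h | h
    · rw [collapse_α_of_eq M hstep hb1 hb2 hb3 h, ih d (by omega)]
      exact castV_comp_castV_comp M _ _ _
    · have hmono : f u ≤ f (u + n) := monotone_of_succ_eq_or_eq_succ hstep (Nat.le_add_right u n)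
      obtain ⟨e, rfl⟩ : ∃ e, d = e + 1 := ⟨d - 1, by omega⟩
      have he : f (u + n) = f u + e := by omega
      rw [collapse_α_of_eq_succ M hstep hb1 hb2 hb3 h, ih e he, pathMap_succ]
      -- Restated over the spaces of `M`: rewriting fails on composites typed over `collapse`.
      have key : ((castV M h.symm).comp (M.α (f (u + n)))).comp
            ((castV M he.symm).comp (pathMap M (f u) e)) =
          (castV M hd.symm).comp ((M.α (f u + e)).comp (pathMap M (f u) e)) := by
        rw [LinearMap.comp_assoc, ← LinearMap.comp_assoc (pathMap M (f u) e), α_comp_castV]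
        simp only [LinearMap.comp_assoc, castV_comp_castV_comp]
      exact key

lemma pathMap_collapse (u len u' d : ℕ) (hu : f u = u') (hd : f (u + len) = u' + d) :
    pathMap (collapse M a1 a2 a3 f hstep hb1 hb2 hb3) u len =
      (castV M hd.symm).comp ((pathMap M u' d).comp (castV M hu)) := by
  subst hu
  exact pathMap_collapse_eq_castV M hstep hb1 hb2 hb3 u len d hd

end Collapse

theorem stmt10_general (f : ℕ → ℕ)
    (M : QRep k c1 c2 c3) (hM1 : Rel1 M) (hM2 : Rel2 M)
    (hstep : ∀ i, f (i + 1) = f i ∨ f (i + 1) = f i + 1)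
    (hb1 : f a1 = c1) (hb2 : f (a1 + a2) = c1 + c2)
    (hb3 : f (a1 + a2 + a3) = c1 + c2 + c3) :
    Rel1 (collapse M a1 a2 a3 f hstep hb1 hb2 hb3) ∧
    Rel2 (collapse M a1 a2 a3 f hstep hb1 hb2 hb3) := by
  have hpath₁ := pathMap_collapse M hstep hb1 hb2 hb3 a1 a2 c1 c2 hb1 hb2
  have hpath₂ := pathMap_collapse M hstep hb1 hb2 hb3 (a1 + a2) a3 (c1 + c2) c3 hb2 hb3
  constructor
  · have key : ((castV M hb1.symm).comp (M.β1.comp (castV M hb2))).comp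
        ((castV M hb2.symm).comp ((pathMap M c1 c2).comp (castV M hb1))) = 0 := by
      simp only [LinearMap.comp_assoc, castV_comp_castV_comp, castV_rfl, LinearMap.id_comp]
      rw [← LinearMap.comp_assoc _ _ M.β1, show M.β1.comp (pathMap M c1 c2) = 0 from hM1]
      simp
    rw [Rel1, hpath₁]
    exact key
  · have key : ((castV M hb2.symm).comp ((pathMap M c1 c2).comp (castV M hb1))).comp
          ((castV M hb1.symm).comp (M.β1.comp (castV M hb2))) =
        ((castV M hb2.symm).comp (M.β2.comp (castV M hb3))).comp
          ((castV M hb3.symm).comp ((pathMap M (c1 + c2) c3).comp (castV M hb2))) := by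
      simp only [LinearMap.comp_assoc, castV_comp_castV_comp, castV_rfl, LinearMap.id_comp]
      rw [← LinearMap.comp_assoc _ M.β1, show (pathMap M c1 c2).comp M.β1 = _ from hM2]
      simp only [LinearMap.comp_assoc]
    rw [Rel2, hpath₁, hpath₂]
    exact key

/-- If `M` is a representation of `Q(ã)` satisfying the metabelian relations and `f` is the
collapsing map attached to `ã ≤ a` (given by its defining piecewise formula `hd0, …, hd2'`),
then the collapsed representation of `Q(a)` again satisfies the relations. -/
theorem stmt10 (ha1 : 1 ≤ a1) (ha2 : 1 ≤ a2) (ha3 : 1 ≤ a3)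
    (hc1 : 1 ≤ c1) (hc2 : 1 ≤ c2) (hc3 : 1 ≤ c3)
    (hle1 : c1 ≤ a1) (hle2 : c2 ≤ a2) (hle3 : c3 ≤ a3)
    (f : ℕ → ℕ)
    (hd0 : ∀ i, 0 < i → i ≤ c1 → f i = i)
    (hd0' : ∀ i, c1 < i → i ≤ a1 → f i = c1)
    (hd1 : ∀ i, a1 < i → i ≤ a1 + c2 → f i = i - a1 + c1)
    (hd1' : ∀ i, a1 + c2 < i → i ≤ a1 + a2 → f i = c1 + c2)
    (hd2 : ∀ i, a1 + a2 < i → i ≤ a1 + a2 + c3 → f i = i - (a1 + a2) + (c1 + c2))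
    (hd2' : ∀ i, a1 + a2 + c3 < i → i ≤ a1 + a2 + a3 → f i = c1 + c2 + c3)
    (M : QRep k c1 c2 c3) (hM1 : Rel1 M) (hM2 : Rel2 M)
    (hstep : ∀ i, f (i + 1) = f i ∨ f (i + 1) = f i + 1)
    (hb1 : f a1 = c1) (hb2 : f (a1 + a2) = c1 + c2)
    (hb3 : f (a1 + a2 + a3) = c1 + c2 + c3) :
    Rel1 (collapse M a1 a2 a3 f hstep hb1 hb2 hb3) ∧
    Rel2 (collapse M a1 a2 a3 f hstep hb1 hb2 hb3) :=
  stmt10_general f M hM1 hM2 hstep hb1 hb2 hb3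
end
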